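/- arXiv:1505.04654 — 2 statements merged into one kernel-verified Lean document; each statement's English description precedes it below -/
import Mathlib

section
/- Let V be a finite-dimensional real normed vector space and D ⊆ V a balanced cone spanning V. If f : B(x₀, 2r) → ℝ is D-convex, then f is Lipschitz on B(x₀, r) with Lipschitz constant at most (c₀/r)·osc(f, B(x₀,2r)), where c₀ depends only on the norm and the cone D, and osc denotes the oscillation sup f − inf f over the ball. -/
/-!
Along a direction `u ∈ D` the function is convex, so for `z, w` in `B(x₀, 3r/2)` with
`w - z ∈ D` the chord through `w` and a point `r/2` beyond it gives
`f w - f z ≤ (2m/r)‖w - z‖`. A basis of `V` taken inside `D` decomposes any short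
vector `w - z` into `D`-steps of total length `≤ C‖w - z‖`; walking along them keeps
us inside `B(x₀, 3r/2)`, which yields the bound for nearby points, and subdividing a
segment extends it to all of `B(x₀, r)`.
-/

open Set Metric

/-- D-convexity of a real-valued function on a set `S`: convexity along every
segment contained in `S` whose direction lies in `D`. -/
def DConvexOn {V : Type*} [NormedAddCommGroup V] [NormedSpace ℝ V]
    (D S : Set V) (f : V → ℝ) : Prop :=
  ∀ ⦃x y : V⦄, x ∈ S → y ∈ S → x - y ∈ D → segment ℝ x y ⊆ S →
    ConvexOn ℝ (segment ℝ x y) f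

theorem Module.Basis.exists_sum_norm_repr_smul_le {𝕜 E ι : Type*} [NontriviallyNormedField 𝕜]
    [CompleteSpace 𝕜] [NormedAddCommGroup E] [NormedSpace 𝕜 E] [Fintype ι]
    (b : Module.Basis ι 𝕜 E) :
    ∃ C, 0 < C ∧ ∀ v, ∑ i, ‖b.repr v i • b i‖ ≤ C * ‖v‖ := by
  set L := (b.equivFunL : E →L[𝕜] ι → 𝕜)
  refine ⟨‖L‖ * ∑ i, ‖b i‖ + 1, by positivity, fun v => ?_⟩
  have hrepr (i : ι) : ‖b.repr v i‖ ≤ ‖L‖ * ‖v‖ :=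
    (norm_le_pi_norm (L v) i).trans (L.le_opNorm v)
  calc ∑ i, ‖b.repr v i • b i‖ ≤ ∑ i, ‖L‖ * ‖v‖ * ‖b i‖ := by
        gcongr with i
        rw [_root_.norm_smul]
        gcongr
        exact hrepr i
    _ = ‖L‖ * (∑ i, ‖b i‖) * ‖v‖ := by rw [← Finset.mul_sum]; ring
    _ ≤ (‖L‖ * ∑ i, ‖b i‖ + 1) * ‖v‖ := by gcongr; linarith

section

variable {V : Type*} [NormedAddCommGroup V]

theorem apply_add_sum_sub_le_mul_sum_norm {ι : Type*} {D T : Set V} {f : V → ℝ} {K : ℝ}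
    (hK : ∀ z ∈ T, ∀ w ∈ T, w - z ∈ D → f w - f z ≤ K * ‖w - z‖) {v : ι → V}
    (hv : ∀ i, v i ∈ D) (z : V) (s : Finset ι) (hs : closedBall z (∑ i ∈ s, ‖v i‖) ⊆ T) :
    f (z + ∑ i ∈ s, v i) - f z ≤ K * ∑ i ∈ s, ‖v i‖ := by
  classical
  induction s using Finset.induction_on with
  | empty => simp
  | insert a s ha ih =>
    have hmem (t : Finset ι) (ht : t ⊆ insert a s) : z + ∑ i ∈ t, v i ∈ T := hs <| by
      rw [mem_closedBall_iff_norm, add_sub_cancel_left]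
      exact (norm_sum_le _ _).trans
        (Finset.sum_le_sum_of_subset_of_nonneg ht fun _ _ _ => norm_nonneg _)
    have hs' : closedBall z (∑ i ∈ s, ‖v i‖) ⊆ T :=
      (closedBall_subset_closedBall (Finset.sum_le_sum_of_subset_of_nonneg
        (Finset.subset_insert a s) fun _ _ _ => norm_nonneg _)).trans hs
    have hdiff : z + ∑ i ∈ insert a s, v i - (z + ∑ i ∈ s, v i) = v a := by
      rw [Finset.sum_insert ha]; abel
    have hstep := hK _ (hmem s (Finset.subset_insert a s)) _ (hmem _ subset_rfl) (hdiff ▸ hv a)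
    rw [hdiff] at hstep
    rw [Finset.sum_insert ha (f := fun i => ‖v i‖)]
    linarith [ih hs']

variable [NormedSpace ℝ V]

theorem DConvexOn.sub_le_div_mul_norm {D S : Set V} {f : V → ℝ} {m δ : ℝ}
    (hDbal : ∀ (t : ℝ), ∀ x ∈ D, t • x ∈ D) (hf : DConvexOn D S f) (hS : Convex ℝ S)
    (hm : ∀ u ∈ S, ∀ v ∈ S, f u - f v ≤ m) (hδ : 0 < δ) {z w : V} (hz : z ∈ S)
    (hw : closedBall w δ ⊆ S) (hzw : w - z ∈ D) :
    f w - f z ≤ m / δ * ‖w - z‖ := by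
  rcases eq_or_ne w z with rfl | hne
  · simp
  set u := w - z
  have hu : 0 < ‖u‖ := norm_pos_iff.2 (sub_ne_zero.2 hne)
  -- `w` lies on the segment from `z` to the point `w'` at distance `δ` beyond `w`
  set w' := w + (δ / ‖u‖) • u
  have hw' : w' ∈ S := hw <| by
    rw [mem_closedBall_iff_norm, add_sub_cancel_left, norm_smul,
      Real.norm_of_nonneg (by positivity), div_mul_cancel₀ _ hu.ne']
  have hw'z : w' - z = (1 + δ / ‖u‖) • u := by simp only [w', u]; module
  set s := (1 + δ / ‖u‖)⁻¹
  have hs0 : 0 ≤ s := by positivity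
  have hs1 : s ≤ 1 := inv_le_one_of_one_le₀ (by linarith [div_pos hδ hu])
  have hw_eq : s • w' + (1 - s) • z = w := by
    have : s • w' + (1 - s) • z = z + s • (w' - z) := by module
    rw [this, hw'z, smul_smul, inv_mul_cancel₀ (by positivity), one_smul, add_sub_cancel]
  have hconv := (hf hw' hz (hw'z ▸ hDbal _ _ hzw) (hS.segment_subset hw' hz)).2
    (left_mem_segment ℝ w' z) (right_mem_segment ℝ w' z) hs0 (sub_nonneg.2 hs1) (by ring)
  rw [hw_eq, smul_eq_mul, smul_eq_mul] at hconv
  have hm0 : 0 ≤ m := by simpa using hm z hz z hz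
  calc f w - f z ≤ s * (f w' - f z) := by linarith
    _ ≤ s * m := by gcongr; exact hm w' hw' z hz
    _ ≤ (δ / ‖u‖)⁻¹ * m := by gcongr; exact inv_anti₀ (by positivity) (by linarith)
    _ = m / δ * ‖u‖ := by rw [inv_div]; ring

theorem sub_le_mul_mul_norm_of_basis {ι : Type*} [Fintype ι] {D T : Set V} {f : V → ℝ}
    {K C : ℝ} (hDbal : ∀ (t : ℝ), ∀ x ∈ D, t • x ∈ D)
    (hK : ∀ z ∈ T, ∀ w ∈ T, w - z ∈ D → f w - f z ≤ K * ‖w - z‖) (hK0 : 0 ≤ K)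
    (b : Module.Basis ι ℝ V) (hb : ∀ i, b i ∈ D)
    (hC : ∀ v, ∑ i, ‖b.repr v i • b i‖ ≤ C * ‖v‖) {z w : V}
    (hzw : closedBall z (C * ‖w - z‖) ⊆ T) :
    f w - f z ≤ K * C * ‖w - z‖ := by
  have h := apply_add_sum_sub_le_mul_sum_norm hK (fun i => hDbal _ _ (hb i)) z Finset.univ
    ((closedBall_subset_closedBall (hC (w - z))).trans hzw)
  rw [b.sum_repr, add_sub_cancel] at h
  calc f w - f z ≤ K * ∑ i, ‖b.repr (w - z) i • b i‖ := h
    _ ≤ K * (C * ‖w - z‖) := by gcongr; exact hC _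
    _ = K * C * ‖w - z‖ := by ring

theorem Convex.sub_le_mul_norm_of_forall_norm_le {S : Set V} {f : V → ℝ} {K δ : ℝ}
    (hS : Convex ℝ S) (hδ : 0 < δ)
    (h : ∀ z ∈ S, ∀ w ∈ S, ‖w - z‖ ≤ δ → f w - f z ≤ K * ‖w - z‖) {z w : V} (hz : z ∈ S)
    (hw : w ∈ S) : f w - f z ≤ K * ‖w - z‖ := by
  obtain ⟨N, hN⟩ := exists_nat_gt (‖w - z‖ / δ)
  have hN0 : (0 : ℝ) < N := lt_of_le_of_lt (by positivity) hN
  set P : ℕ → V := fun j => z + ((j : ℝ) / N) • (w - z)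
  have hP (j : ℕ) (hj : j ≤ N) : P j ∈ S :=
    hS.add_smul_sub_mem hz hw ⟨by positivity, div_le_one_of_le₀ (by exact_mod_cast hj) hN0.le⟩
  have hPstep (j : ℕ) : P (j + 1) - P j = (N : ℝ)⁻¹ • (w - z) := by
    simp only [P]; push_cast; module
  have hPnorm : ‖(N : ℝ)⁻¹ • (w - z)‖ = ‖w - z‖ / N := by
    rw [norm_smul, norm_inv, Real.norm_natCast, inv_mul_eq_div]
  have hsmall : ‖w - z‖ / N ≤ δ := by
    rw [div_lt_iff₀ hδ] at hN
    rw [div_le_iff₀ hN0]; linarith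
  calc f w - f z = ∑ j ∈ Finset.range N, (f (P (j + 1)) - f (P j)) := by
        rw [Finset.sum_range_sub (fun j => f (P j))]; simp [P, hN0.ne']
    _ ≤ ∑ _j ∈ Finset.range N, K * (‖w - z‖ / N) := Finset.sum_le_sum fun j hj => by
        have hj := Finset.mem_range.1 hj
        have := h _ (hP j hj.le) _ (hP (j + 1) hj) (by rw [hPstep, hPnorm]; exact hsmall)
        rwa [hPstep, hPnorm] at this
    _ = K * ‖w - z‖ := by rw [Finset.sum_const, Finset.card_range, nsmul_eq_mul]; field_simp

end

/-- local Lipschitz estimate for D-convex functions, with constant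
`(c₀/r) · osc(f, B(x₀,2r))` where `c₀` depends only on the norm and the cone `D`. -/
theorem dconvex_locally_lipschitz
    {V : Type*} [NormedAddCommGroup V] [NormedSpace ℝ V] [FiniteDimensional ℝ V]
    (D : Set V) (hDbal : ∀ (t : ℝ), ∀ x ∈ D, t • x ∈ D)
    (hDspan : Submodule.span ℝ D = ⊤) :
    ∃ c₀ : ℝ, 0 < c₀ ∧
      ∀ (x₀ : V) (r : ℝ), 0 < r →
        ∀ f : V → ℝ, DConvexOn D (ball x₀ (2 * r)) f →
          ∀ m : ℝ, (∀ u ∈ ball x₀ (2 * r), ∀ v ∈ ball x₀ (2 * r), f u - f v ≤ m) →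
            ∀ x ∈ ball x₀ r, ∀ y ∈ ball x₀ r,
              |f x - f y| ≤ c₀ / r * m * ‖x - y‖ := by
  obtain ⟨s, b, hb⟩ : ∃ (s : Set V) (b : Module.Basis s ℝ V), ∀ i, b i ∈ D :=
    ⟨_, .ofSpan hDspan.ge, fun i => Module.Basis.ofSpan_subset hDspan.ge (mem_range_self i)⟩
  have := Module.Finite.finite_basis b
  have : Fintype s := Fintype.ofFinite s
  obtain ⟨C, hC0, hC⟩ := b.exists_sum_norm_repr_smul_le
  refine ⟨2 * C, by positivity, fun x₀ r hr f hf m hm => ?_⟩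
  have hx₀ : x₀ ∈ ball x₀ (2 * r) := mem_ball_self (by positivity)
  have hm0 : 0 ≤ m := by simpa using hm x₀ hx₀ x₀ hx₀
  have hdir : ∀ z ∈ ball x₀ (3 / 2 * r), ∀ w ∈ ball x₀ (3 / 2 * r), w - z ∈ D →
      f w - f z ≤ m / (r / 2) * ‖w - z‖ := fun z hz w hw =>
    hf.sub_le_div_mul_norm hDbal (convex_ball _ _) hm (by positivity)
      (ball_subset_ball (by linarith) hz)
      (closedBall_subset_ball' (by rw [mem_ball] at hw; linarith))
  have hlocal : ∀ z ∈ ball x₀ r, ∀ w ∈ ball x₀ r, ‖w - z‖ ≤ r / (2 * C) →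
      f w - f z ≤ 2 * C / r * m * ‖w - z‖ := by
    intro z hz w _ hzw
    have hCzw : C * ‖w - z‖ ≤ r / 2 := by
      rw [le_div_iff₀ (by positivity)] at hzw; linarith
    have hsub : closedBall z (C * ‖w - z‖) ⊆ ball x₀ (3 / 2 * r) :=
      closedBall_subset_ball' (by rw [mem_ball] at hz; linarith)
    calc f w - f z ≤ m / (r / 2) * C * ‖w - z‖ :=
          sub_le_mul_mul_norm_of_basis hDbal hdir (by positivity) b hb hC hsub
      _ = 2 * C / r * m * ‖w - z‖ := by ring
  have hδ : 0 < r / (2 * C) := by positivity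
  intro x hx y hy
  rw [abs_sub_le_iff]
  exact ⟨(convex_ball x₀ r).sub_le_mul_norm_of_forall_norm_le hδ hlocal hy hx,
    norm_sub_rev x y ▸ (convex_ball x₀ r).sub_le_mul_norm_of_forall_norm_le hδ hlocal hx hy⟩
end

section
/- If f : ℝ^{N×n} → ℝ is rank-one convex (convex along all directions a ⊗ b with a ∈ ℝ^N, b ∈ ℝ^n) and positively 1-homogeneous (f(tξ) = t f(ξ) for t > 0), then for every matrix ξ₀ with rank ξ₀ ≤ 1 there exists a linear functional ℓ on ℝ^{N×n} with ℓ(ξ₀) = f(ξ₀) and f ≥ ℓ everywhere; i.e., f is convex at every matrix of rank at most one. -/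
open Set

/-- Rank-one convexity: convexity along all directions `a ⊗ b`. -/
def RankOneConvex {N n : ℕ} (f : Matrix (Fin N) (Fin n) ℝ → ℝ) : Prop :=
  ∀ (ξ : Matrix (Fin N) (Fin n) ℝ) (a : Fin N → ℝ) (b : Fin n → ℝ),
    ConvexOn ℝ Set.univ (fun t : ℝ => f (ξ + t • Matrix.vecMulVec a b))

/-!
Call `D` the rank-one matrices. For `η ∈ D`, the blow-down
`ξ ↦ lim_{t → ∞} (f (ξ + t • η) - t * f η)` of `f` is again rank-one convex and positively
homogeneous, lies below `f`, is affine along `η`, and stays affine along every direction along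
which `f` was. The limit exists because the slope is antitone and bounded below, both consequences
of the subadditivity `f (ξ + η) ≤ f ξ + f η` for `η ∈ D`; this in turn follows from convexity along
`η` and homogeneity, `f (ξ + η) ≤ (1 - s) * f ξ + f (s • ξ + η)`, once `f` is known to be upper
semicontinuous along rays, which holds because every matrix is a finite sum of elements of `D`.
Blowing down along `ξ₀` and then along the matrix units gives a function that is affine along a
spanning set, hence linear, below `f`, and equal to `f` at `ξ₀`.
-/

open Filter Topology Pointwise

section General

variable {E : Type*} [AddCommGroup E] [Module ℝ E]

def ConvexAlong (D : Set E) (g : E → ℝ) : Prop :=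
  ∀ ξ, ∀ d ∈ D, ConvexOn ℝ univ fun t : ℝ => g (ξ + t • d)

structure HomogConvexAlong (D : Set E) (g : E → ℝ) : Prop where
  convexAlong : ConvexAlong D g
  map_smul_of_pos : ∀ t : ℝ, 0 < t → ∀ ξ, g (t • ξ) = t * g ξ

structure IsSpanningCone (D : Set E) : Prop where
  smul_mem : ∀ (c : ℝ), ∀ d ∈ D, c • d ∈ D
  span_eq_top : Submodule.span ℝ D = ⊤

def AffineAlong (g : E → ℝ) (μ : E) (c : ℝ) : Prop :=
  ∀ ζ (s : ℝ), g (ζ + s • μ) = g ζ + s * c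

/-- The slope `t ↦ g (ξ + t • η) - t * g η` is antitone, so this infimum is its limit as
`t → ∞`. -/
noncomputable def blowDown (g : E → ℝ) (η ξ : E) : ℝ :=
  ⨅ t : ℝ, g (ξ + t • η) - t * g η

variable {D : Set E} {g : E → ℝ}

theorem IsSpanningCone.mem_closure (hD : IsSpanningCone D) (x : E) :
    x ∈ AddSubmonoid.closure D := by
  have hD' : (univ : Set ℝ) • D = D := Subset.antisymm
    (by rintro _ ⟨c, -, d, hd, rfl⟩; exact hD.smul_mem c d hd)
    (fun d hd => ⟨1, mem_univ _, d, hd, one_smul ℝ d⟩)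
  rw [← hD', ← Submodule.span_eq_closure, hD.span_eq_top]
  trivial

theorem IsSpanningCone.exists_finset_subset_span_eq_top [FiniteDimensional ℝ E]
    (hD : IsSpanningCone D) :
    ∃ s : Finset E, ↑s ⊆ D ∧ Submodule.span ℝ (s : Set E) = ⊤ := by
  obtain ⟨s, hsD, -, hs, -⟩ := Submodule.exists_finset_span_eq_linearIndepOn ℝ D
  exact ⟨s, hsD, hs.trans hD.span_eq_top⟩

theorem eventually_nhdsGT_zero_mul_lt (K : ℝ) {ε : ℝ} (hε : 0 < ε) :
    ∀ᶠ s in 𝓝[>] (0 : ℝ), s * K < ε :=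
  Tendsto.eventually_lt_const hε <| by
    simpa using ((continuous_mul_const K).tendsto 0).mono_left nhdsWithin_le_nhds

theorem ConvexAlong.map_add_smul_le (hg : ConvexAlong D g) {d : E} (hd : d ∈ D) (ξ : E) {s : ℝ}
    (hs₀ : 0 ≤ s) (hs₁ : s ≤ 1) : g (ξ + s • d) ≤ (1 - s) * g ξ + s * g (ξ + d) := by
  simpa using (hg ξ d hd).2 (mem_univ 0) (mem_univ 1) (sub_nonneg.2 hs₁) hs₀ (sub_add_cancel 1 s)

theorem ConvexAlong.upperSemicontinuousWithinAt (hg : ConvexAlong D g) {x : E}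
    (hx : x ∈ AddSubmonoid.closure D) (ζ : E) :
    UpperSemicontinuousWithinAt (fun s : ℝ => g (ζ + s • x)) (Ioi 0) 0 := by
  induction hx using AddSubmonoid.closure_induction_left generalizing ζ with
  | zero => simpa using upperSemicontinuousWithinAt_const
  | add_left d hd y _ ih =>
    intro r hr
    simp only [zero_smul, add_zero] at hr
    have hnear := ih ζ (g ζ + (r - g ζ) / 2) (by simp; linarith)
    have hbdd := ih (ζ + d) (g (ζ + d) + 1) (by simp)
    have hsmall := eventually_nhdsGT_zero_mul_lt (g (ζ + d) + 1 - g ζ - (r - g ζ) / 2)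
      (half_pos (sub_pos.2 hr))
    filter_upwards [hnear, hbdd, Ioo_mem_nhdsGT one_pos, hsmall] with s hnear hbdd ⟨hs₀, hs₁⟩ hsmall
    -- convexity along `d` from `ζ + s • y`, whose far end `ζ + d + s • y` is kept bounded by the
    -- induction hypothesis at `ζ + d`
    have hconv := hg.map_add_smul_le hd (ζ + s • y) hs₀.le hs₁.le
    rw [add_right_comm] at hbdd
    rw [smul_add, add_comm (s • d), ← add_assoc]
    nlinarith

theorem AffineAlong.slope_eq {μ : E} {c : ℝ} (h : AffineAlong g μ c) (h₀ : g 0 = 0) : c = g μ := by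
  simpa [h₀] using (h 0 1).symm

theorem exists_linearMap_of_affineAlong {s : Set E} (hs : Submodule.span ℝ s = ⊤) (h₀ : g 0 = 0)
    (h : ∀ v ∈ s, ∃ c, AffineAlong g v c) : ∃ ℓ : E →ₗ[ℝ] ℝ, ∀ x, ℓ x = g x := by
  have hall (x : E) : AffineAlong g x (g x) := by
    have hx : x ∈ Submodule.span ℝ s := hs ▸ Submodule.mem_top
    induction hx using Submodule.span_induction with
    | mem v hv =>
      obtain ⟨c, hc⟩ := h v hv
      rwa [← hc.slope_eq h₀]
    | zero => intro ζ r; simp [h₀]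
    | add x y _ _ hx hy =>
      intro ζ r
      have hxy := hy x 1
      rw [one_smul, one_mul] at hxy
      rw [smul_add, ← add_assoc, hy, hx, hxy]
      ring
    | smul a x _ hx =>
      intro ζ r
      have hax := hx 0 a
      rw [zero_add, h₀, zero_add] at hax
      rw [smul_smul, hx, hax]
      ring
  refine ⟨{ toFun := g, map_add' := fun x y => ?_, map_smul' := fun a x => ?_ }, fun _ => rfl⟩
  · simpa using hall y x 1
  · simpa [h₀] using hall x 0 a

namespace HomogConvexAlong

theorem map_zero (hg : HomogConvexAlong D g) : g 0 = 0 := by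
  have h := hg.map_smul_of_pos 2 two_pos 0
  rw [smul_zero] at h
  linarith

theorem map_smul_of_nonneg (hg : HomogConvexAlong D g) {t : ℝ} (ht : 0 ≤ t) (ξ : E) :
    g (t • ξ) = t * g ξ := by
  rcases ht.eq_or_lt with rfl | ht
  · simp [hg.map_zero]
  · exact hg.map_smul_of_pos t ht ξ

variable (hg : HomogConvexAlong D g) (hD : IsSpanningCone D)
include hg hD

theorem map_add_le (ξ : E) {η : E} (hη : η ∈ D) : g (ξ + η) ≤ g ξ + g η := by
  refine le_of_forall_pos_lt_add fun ε hε => ?_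
  have husc := hg.convexAlong.upperSemicontinuousWithinAt (hD.mem_closure ξ) η (g η + ε / 2)
    (by simpa using half_pos hε)
  have hlin := eventually_nhdsGT_zero_mul_lt (-g ξ) (half_pos hε)
  obtain ⟨s, hs, hlin, hs₀, hs₁⟩ := (husc.and (hlin.and (Ioo_mem_nhdsGT one_pos))).exists
  have hscale : s * g (ξ + s⁻¹ • η) = g (s • ξ + η) := by
    rw [← hg.map_smul_of_pos s hs₀, smul_add, smul_smul, mul_inv_cancel₀ hs₀.ne', one_smul]
  calc g (ξ + η) = g (ξ + s • s⁻¹ • η) := by rw [smul_smul, mul_inv_cancel₀ hs₀.ne', one_smul]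
    _ ≤ (1 - s) * g ξ + s * g (ξ + s⁻¹ • η) :=
      hg.convexAlong.map_add_smul_le (hD.smul_mem _ _ hη) ξ hs₀.le hs₁.le
    _ < g ξ + g η + ε := by rw [hscale, add_comm (s • ξ)]; linarith

theorem exists_map_add_le (x : E) : ∃ C, ∀ ξ, g (ξ + x) ≤ g ξ + C := by
  induction hD.mem_closure x using AddSubmonoid.closure_induction with
  | mem d hd => exact ⟨g d, fun ξ => hg.map_add_le hD ξ hd⟩
  | zero => exact ⟨0, by simp⟩
  | add x y _ _ hx hy =>
    obtain ⟨C, hC⟩ := hx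
    obtain ⟨C', hC'⟩ := hy
    exact ⟨C + C', fun ξ => by linarith [add_assoc ξ x y ▸ hC' (ξ + x), hC ξ]⟩

theorem antitone_slope {η : E} (hη : η ∈ D) (ξ : E) :
    Antitone fun t : ℝ => g (ξ + t • η) - t * g η := by
  intro t u htu
  have h := hg.map_add_le hD (ξ + t • η) (hD.smul_mem (u - t) η hη)
  rw [add_assoc, ← add_smul, add_sub_cancel, hg.map_smul_of_nonneg (sub_nonneg.2 htu)] at h
  dsimp only
  linarith

theorem bddBelow_slope {η : E} (hη : η ∈ D) (ξ : E) :
    BddBelow (range fun t : ℝ => g (ξ + t • η) - t * g η) := by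
  obtain ⟨C, hC⟩ := hg.exists_map_add_le hD (-ξ)
  refine ⟨-C, forall_mem_range.2 fun t => ?_⟩
  have h := hC (ξ + max t 0 • η)
  rw [add_neg_cancel_comm, hg.map_smul_of_nonneg (le_max_right t 0)] at h
  exact (by linarith : -C ≤ g (ξ + max t 0 • η) - max t 0 * g η).trans
    (hg.antitone_slope hD hη ξ (le_max_left t 0))

theorem tendsto_blowDown {η : E} (hη : η ∈ D) (ξ : E) :
    Tendsto (fun t : ℝ => g (ξ + t • η) - t * g η) atTop (𝓝 (blowDown g η ξ)) :=
  tendsto_atTop_ciInf (hg.antitone_slope hD hη ξ) (hg.bddBelow_slope hD hη ξ)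

theorem blowDown_le {η : E} (hη : η ∈ D) (ξ : E) : blowDown g η ξ ≤ g ξ := by
  simpa using (hg.antitone_slope hD hη ξ).le_of_tendsto (hg.tendsto_blowDown hD hη ξ) 0

theorem homogConvexAlong_blowDown {η : E} (hη : η ∈ D) : HomogConvexAlong D (blowDown g η) where
  convexAlong ξ d hd := by
    refine ⟨convex_univ, fun x _ y _ p q hp hq hpq => ?_⟩
    have hlim (r : ℝ) := hg.tendsto_blowDown hD hη (ξ + r • d)
    refine le_of_tendsto_of_tendsto' (hlim _) (((hlim x).const_mul p).add ((hlim y).const_mul q))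
      fun t => ?_
    have hconv := (hg.convexAlong (ξ + t • η) d hd).2 (mem_univ x) (mem_univ y) hp hq hpq
    simp only [smul_eq_mul, add_right_comm ξ (t • η)] at hconv ⊢
    linear_combination hconv + t * g η * hpq
  map_smul_of_pos c hc ξ := by
    have hscaled := (hg.tendsto_blowDown hD hη (c • ξ)).comp (tendsto_id.const_mul_atTop hc)
    refine tendsto_nhds_unique hscaled
      (((hg.tendsto_blowDown hD hη ξ).const_mul c).congr fun t => ?_)
    simp only [Function.comp_apply, id, mul_smul, ← smul_add, hg.map_smul_of_pos c hc]
    ring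

theorem affineAlong_blowDown_self {η : E} (hη : η ∈ D) : AffineAlong (blowDown g η) η (g η) := by
  intro ζ s
  have hshifted := (hg.tendsto_blowDown hD hη ζ).comp (tendsto_atTop_add_const_left _ s tendsto_id)
  refine tendsto_nhds_unique (hg.tendsto_blowDown hD hη (ζ + s • η))
    ((hshifted.add_const (s * g η)).congr fun t => ?_)
  simp only [Function.comp_apply, id, add_smul, add_assoc]
  ring

theorem affineAlong_blowDown {η μ : E} (hη : η ∈ D) {c : ℝ} (h : AffineAlong g μ c) :
    AffineAlong (blowDown g η) μ c := by
  intro ζ s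
  refine tendsto_nhds_unique (hg.tendsto_blowDown hD hη (ζ + s • μ))
    (((hg.tendsto_blowDown hD hη ζ).add_const (s * c)).congr fun t => ?_)
  rw [add_right_comm, h]
  ring

theorem exists_le_affineAlong (s : Finset E) (hs : ↑s ⊆ D) :
    ∃ G, HomogConvexAlong D G ∧ (∀ ξ, G ξ ≤ g ξ) ∧
      (∀ μ c, AffineAlong g μ c → AffineAlong G μ c) ∧ ∀ v ∈ s, ∃ c, AffineAlong G v c := by
  classical
  induction s using Finset.induction_on with
  | empty => exact ⟨g, hg, fun _ => le_rfl, fun _ _ h => h, by simp⟩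
  | insert v s _ ih =>
    rw [Finset.coe_insert, insert_subset_iff] at hs
    obtain ⟨G, hG, hGle, hGaff, hGs⟩ := ih hs.2
    refine ⟨blowDown G v, hG.homogConvexAlong_blowDown hD hs.1,
      fun ξ => (hG.blowDown_le hD hs.1 ξ).trans (hGle ξ),
      fun μ c h => hG.affineAlong_blowDown hD hs.1 (hGaff μ c h), fun w hw => ?_⟩
    rcases Finset.mem_insert.1 hw with rfl | hw
    · exact ⟨G w, hG.affineAlong_blowDown_self hD hs.1⟩
    · obtain ⟨c, hc⟩ := hGs w hw
      exact ⟨c, hG.affineAlong_blowDown hD hs.1 hc⟩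

theorem exists_linearMap_le_eq [FiniteDimensional ℝ E] {ξ₀ : E} (hξ₀ : ξ₀ ∈ D) :
    ∃ ℓ : E →ₗ[ℝ] ℝ, ℓ ξ₀ = g ξ₀ ∧ ∀ ξ, ℓ ξ ≤ g ξ := by
  obtain ⟨s, hsD, hspan⟩ := hD.exists_finset_subset_span_eq_top
  obtain ⟨G, hG, hGle, hGaff, hGs⟩ :=
    (hg.homogConvexAlong_blowDown hD hξ₀).exists_le_affineAlong hD s hsD
  have hGξ₀ := (hGaff _ _ (hg.affineAlong_blowDown_self hD hξ₀)).slope_eq hG.map_zero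
  obtain ⟨ℓ, hℓ⟩ := exists_linearMap_of_affineAlong hspan hG.map_zero hGs
  exact ⟨ℓ, by rw [hℓ, hGξ₀], fun ξ => (hℓ ξ).trans_le
    ((hGle ξ).trans (hg.blowDown_le hD hξ₀ ξ))⟩

end HomogConvexAlong

end General

namespace Matrix

variable {m n : Type*} [Fintype n]

theorem exists_vecMulVec_eq_of_rank_le_one {K : Type*} [Field K] {A : Matrix m n K}
    (h : A.rank ≤ 1) : ∃ a b, vecMulVec a b = A := by
  have := Module.Finite.span_of_finite K (finite_range A.col)
  rw [rank_eq_finrank_span_cols, Submodule.finrank_le_one_iff_isPrincipal] at h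
  obtain ⟨a, ha⟩ := h.principal
  have hcol (j : n) : ∃ c : K, c • a = A.col j :=
    Submodule.mem_span_singleton.1 (ha ▸ Submodule.subset_span (mem_range_self j))
  choose b hb using hcol
  refine ⟨a, b, ext fun i j => ?_⟩
  simpa [vecMulVec_apply, mul_comm] using congrFun (hb j) i

theorem isSpanningCone_vecMulVec [Fintype m] :
    IsSpanningCone {A : Matrix m n ℝ | ∃ a b, vecMulVec a b = A} where
  smul_mem c := by
    rintro _ ⟨a, b, rfl⟩
    exact ⟨c • a, b, smul_vecMulVec c a b⟩
  span_eq_top := by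
    classical
    refine eq_top_iff.2 ((stdBasis ℝ m n).span_eq.symm.le.trans (Submodule.span_mono ?_))
    rintro _ ⟨⟨i, j⟩, rfl⟩
    exact ⟨Pi.single i 1, Pi.single j 1,
      by rw [stdBasis_eq_single, single_eq_single_vecMulVec_single]⟩

end Matrix

/-- Corollary 2 of the paper: a rank-one convex positively
1-homogeneous function on `ℝ^{N×n}` is convex at every matrix of rank at most
one: it admits a supporting linear functional there. -/
theorem rankOneConvex_homog_convex_at_rank_one
    {N n : ℕ} (f : Matrix (Fin N) (Fin n) ℝ → ℝ)
    (hrc : RankOneConvex f)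
    (hhom : ∀ t : ℝ, 0 < t → ∀ ξ : Matrix (Fin N) (Fin n) ℝ, f (t • ξ) = t * f ξ)
    (ξ₀ : Matrix (Fin N) (Fin n) ℝ) (hrank : ξ₀.rank ≤ 1) :
    ∃ ℓ : Matrix (Fin N) (Fin n) ℝ →ₗ[ℝ] ℝ, ℓ ξ₀ = f ξ₀ ∧ ∀ ξ, ℓ ξ ≤ f ξ := by
  have hf : HomogConvexAlong {A | ∃ a b, Matrix.vecMulVec a b = A} f :=
    ⟨by rintro ξ _ ⟨a, b, rfl⟩; exact hrc ξ a b, hhom⟩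
  exact hf.exists_linearMap_le_eq Matrix.isSpanningCone_vecMulVec
    (Matrix.exists_vecMulVec_eq_of_rank_le_one hrank)
end
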